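/- arXiv:2208.08238 — 2 statements merged into one kernel-verified Lean document; each statement's English description precedes it below -/
import Mathlib

section
/- For all real numbers x and a with x ≥ a > 0, the inequality (x/(a+x))^(x²/a) ≤ 2/x holds. -/
/-! With `b = x / (a + x)`, the bound `log b ≤ b - 1 = -a / (a + x)` gives
`b ^ (x² / a) ≤ exp (-x² / (a + x)) ≤ exp (-x / 2)`, the last step because `a ≤ x`;
finally `exp (-t) ≤ 1 / t` since `exp t ≥ 1 + t`. -/

open Real

lemma Real.rpow_le_exp_mul_sub_one {b y : ℝ} (hb : 0 < b) (hy : 0 ≤ y) :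
    b ^ y ≤ exp (y * (b - 1)) := by
  rw [rpow_def_of_pos hb, mul_comm]
  exact exp_le_exp.mpr (mul_le_mul_of_nonneg_left (log_le_sub_one_of_pos hb) hy)

lemma Real.exp_neg_le_inv {t : ℝ} (ht : 0 < t) : exp (-t) ≤ t⁻¹ := by
  rw [exp_neg]
  exact inv_anti₀ ht (by linarith [add_one_le_exp t])

theorem stmt_0 (x a : ℝ) (ha : 0 < a) (hax : a ≤ x) :
    (x / (a + x)) ^ (x ^ 2 / a) ≤ 2 / x := by
  have hx : 0 < x := ha.trans_le hax
  have hs : 0 < a + x := by linarith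
  have hexponent : x ^ 2 / a * (x / (a + x) - 1) ≤ -(x / 2) := by
    rw [show x ^ 2 / a * (x / (a + x) - 1) = -(x ^ 2 / (a + x)) by field_simp; ring,
      neg_le_neg_iff, div_le_div_iff₀ two_pos hs]
    nlinarith
  calc (x / (a + x)) ^ (x ^ 2 / a)
      ≤ exp (x ^ 2 / a * (x / (a + x) - 1)) :=
        rpow_le_exp_mul_sub_one (by positivity) (by positivity)
    _ ≤ exp (-(x / 2)) := exp_le_exp.mpr hexponent
    _ ≤ (x / 2)⁻¹ := exp_neg_le_inv (by positivity)
    _ = 2 / x := inv_div x 2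
end

section
/- Let K ⊆ ℝᵈ be a nonempty closed convex set, H : ℝᵈ → ℝ differentiable and 1-strongly convex, G₁, G₂ ∈ ℝᵈ, z₀ ∈ K, and η, λ > 0. Define ẑᵢ = argmin_{z ∈ K} { ⟨Gᵢ, z⟩ + (1/λ)H(z) + (1/η)D(z|z₀) } for i = 1,2, where D is the Bregman divergence of H. Then ‖ẑ₁ − ẑ₂‖ ≤ (ηλ/(η+λ))·‖G₁ − G₂‖. -/
/-!
The map `z ↦ (1/λ) H z + (1/η) D(z|z₀)` is `(1/λ + 1/η)`-strongly convex, because `D(·|z₀)`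
differs from `H` by an affine function, and adding the linear term `⟪G, ·⟫` keeps it so.
A strongly convex function grows quadratically away from its minimiser; adding the growth
inequalities at `ẑ₁` and `ẑ₂` cancels everything except the linear terms and leaves
`(1/λ + 1/η) ‖ẑ₁ - ẑ₂‖² ≤ ⟪G₁ - G₂, ẑ₂ - ẑ₁⟫`, so Cauchy–Schwarz concludes.
-/

open RealInnerProductSpace Filter Topology

section NormedSpace

variable {E : Type*} [NormedAddCommGroup E] [NormedSpace ℝ E] {s : Set E} {φ : ℝ → ℝ}
  {m n : ℝ} {f g : E → ℝ}

/-- Along the segment from the minimiser `x` to `z`, uniform convexity gives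
`f x + (1 - t) φ ‖z - x‖ ≤ f z` for `t ∈ (0, 1)`; let `t → 0`. -/
theorem UniformConvexOn.add_le_of_isMinOn (hf : UniformConvexOn s φ f) {x z : E} (hx : x ∈ s)
    (hmin : IsMinOn f s x) (hz : z ∈ s) : f x + φ ‖z - x‖ ≤ f z := by
  have hsegment : ∀ t ∈ Set.Ioo (0 : ℝ) 1, f x + (1 - t) * φ ‖z - x‖ ≤ f z := by
    rintro t ⟨ht₀, ht₁⟩
    have ht₁' : 0 ≤ 1 - t := sub_nonneg.2 ht₁.le
    have hconv := hf.2 hz hx ht₀.le ht₁' (add_sub_cancel t 1)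
    have hle := isMinOn_iff.1 hmin _ (hf.1 hz hx ht₀.le ht₁' (add_sub_cancel t 1))
    rw [smul_eq_mul, smul_eq_mul] at hconv
    nlinarith
  have hlim : Tendsto (fun t : ℝ => f x + (1 - t) * φ ‖z - x‖) (𝓝[>] 0)
      (𝓝 (f x + φ ‖z - x‖)) := by
    refine tendsto_nhdsWithin_of_tendsto_nhds (Continuous.tendsto' ?_ 0 _ (by simp))
    fun_prop
  refine le_of_tendsto hlim ?_
  filter_upwards [Ioo_mem_nhdsGT one_pos] using hsegment

theorem StrongConvexOn.add (hf : StrongConvexOn s m f) (hg : StrongConvexOn s n g) :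
    StrongConvexOn s (m + n) (fun z => f z + g z) :=
  (UniformConvexOn.add hf hg).mono fun r => le_of_eq (by simp only [Pi.add_apply]; ring)

theorem StrongConvexOn.add_convexOn (hf : StrongConvexOn s m f) (hg : ConvexOn ℝ s g) :
    StrongConvexOn s m (fun z => f z + g z) :=
  (UniformConvexOn.add hf (uniformConvexOn_zero.2 hg)).mono fun r => by simp

theorem StrongConvexOn.const_mul (hf : StrongConvexOn s m f) {c : ℝ} (hc : 0 ≤ c) :
    StrongConvexOn s (c * m) (fun z => c * f z) := by
  refine ⟨hf.1, fun x hx y hy a b ha hb hab => ?_⟩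
  have h := mul_le_mul_of_nonneg_left (hf.2 hx hy ha hb hab) hc
  simp only [smul_eq_mul] at h ⊢
  calc c * f (a • x + b • y) ≤ _ := h
    _ = _ := by ring

end NormedSpace

section InnerProductSpace

variable {E : Type*} [NormedAddCommGroup E] [InnerProductSpace ℝ E] {s : Set E} {m : ℝ}
  {f H : E → ℝ}

def bregmanDiv (H : E → ℝ) (H' : E → E) (z z' : E) : ℝ :=
  H z - H z' - ⟪H' z', z - z'⟫

theorem StrongConvexOn.bregmanDiv_left (hH : StrongConvexOn s m H) (H' : E → E) (z' : E) :
    StrongConvexOn s m (bregmanDiv H H' · z') := by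
  have hsplit : (bregmanDiv H H' · z') = fun z => H z + (⟪-H' z', z⟫ + (⟪H' z', z'⟫ - H z')) := by
    funext z
    simp only [bregmanDiv, inner_sub_right, inner_neg_left]
    ring
  rw [hsplit]
  exact hH.add_convexOn (((innerₛₗ ℝ (-H' z')).convexOn hH.1).add_const _)

theorem StrongConvexOn.inner_add (hf : StrongConvexOn s m f) (G : E) :
    StrongConvexOn s m (fun z => ⟪G, z⟫ + f z) := by
  convert hf.add_convexOn ((innerₛₗ ℝ G).convexOn hf.1) using 1
  funext z
  simp [add_comm]

theorem StrongConvexOn.mul_norm_sub_le_of_isMinOn_inner_add (hf : StrongConvexOn s m f)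
    {G₁ G₂ x₁ x₂ : E} (hx₁ : x₁ ∈ s) (hx₂ : x₂ ∈ s)
    (h₁ : IsMinOn (fun z => ⟪G₁, z⟫ + f z) s x₁) (h₂ : IsMinOn (fun z => ⟪G₂, z⟫ + f z) s x₂) :
    m * ‖x₁ - x₂‖ ≤ ‖G₁ - G₂‖ := by
  have hgrowth₁ := UniformConvexOn.add_le_of_isMinOn (hf.inner_add G₁) hx₁ h₁ hx₂
  have hgrowth₂ := UniformConvexOn.add_le_of_isMinOn (hf.inner_add G₂) hx₂ h₂ hx₁
  rw [norm_sub_rev] at hgrowth₁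
  have hsq : m * ‖x₁ - x₂‖ ^ 2 ≤ ‖G₁ - G₂‖ * ‖x₁ - x₂‖ :=
    calc m * ‖x₁ - x₂‖ ^ 2 ≤ ⟪G₁ - G₂, x₂ - x₁⟫ := by
          simp only [inner_sub_left, inner_sub_right] at *
          linarith
      _ ≤ ‖G₁ - G₂‖ * ‖x₂ - x₁‖ := real_inner_le_norm _ _
      _ = ‖G₁ - G₂‖ * ‖x₁ - x₂‖ := by rw [norm_sub_rev x₂]
  rcases (norm_nonneg (x₁ - x₂)).eq_or_lt with h0 | hpos
  · rw [← h0, mul_zero]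
    exact norm_nonneg _
  · exact le_of_mul_le_mul_right (by rwa [mul_assoc, ← sq]) hpos

end InnerProductSpace

theorem stmt_10_general (d : ℕ) (K : Set (EuclideanSpace ℝ (Fin d)))
    (H : EuclideanSpace ℝ (Fin d) → ℝ) (H' : EuclideanSpace ℝ (Fin d) → EuclideanSpace ℝ (Fin d))
    (hstrong : ConvexOn ℝ K (fun z => H z - 1 / 2 * ‖z‖ ^ 2))
    (G₁ G₂ : EuclideanSpace ℝ (Fin d)) (z₀ : EuclideanSpace ℝ (Fin d))
    (η l : ℝ) (hη : 0 < η) (hl : 0 < l)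
    (D : EuclideanSpace ℝ (Fin d) → EuclideanSpace ℝ (Fin d) → ℝ)
    (hD : ∀ z z', D z z' = H z - H z' - ⟪H' z', z - z'⟫)
    (zh1 zh2 : EuclideanSpace ℝ (Fin d)) (hzh1K : zh1 ∈ K) (hzh2K : zh2 ∈ K)
    (hzh1 : ∀ z ∈ K, ⟪G₁, zh1⟫ + (1 / l) * H zh1 + (1 / η) * D zh1 z₀ ≤
                    ⟪G₁, z⟫ + (1 / l) * H z + (1 / η) * D z z₀)
    (hzh2 : ∀ z ∈ K, ⟪G₂, zh2⟫ + (1 / l) * H zh2 + (1 / η) * D zh2 z₀ ≤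
                    ⟪G₂, z⟫ + (1 / l) * H z + (1 / η) * D z z₀) :
    ‖zh1 - zh2‖ ≤ (η * l / (η + l)) * ‖G₁ - G₂‖ := by
  obtain rfl : D = bregmanDiv H H' := funext fun z => funext fun z' => hD z z'
  have hH : StrongConvexOn K 1 H := strongConvexOn_iff_convex.2 hstrong
  have hobj : StrongConvexOn K (1 / l + 1 / η)
      (fun z => 1 / l * H z + 1 / η * bregmanDiv H H' z z₀) := by
    simpa only [mul_one] using
      (hH.const_mul (by positivity)).add ((hH.bregmanDiv_left H' z₀).const_mul (by positivity))
  have hnorm := hobj.mul_norm_sub_le_of_isMinOn_inner_add hzh1K hzh2K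
    (isMinOn_iff.2 fun z hz => by simpa only [add_assoc] using hzh1 z hz)
    (isMinOn_iff.2 fun z hz => by simpa only [add_assoc] using hzh2 z hz)
  calc ‖zh1 - zh2‖ = η * l / (η + l) * ((1 / l + 1 / η) * ‖zh1 - zh2‖) := by
        field_simp
    _ ≤ η * l / (η + l) * ‖G₁ - G₂‖ := by gcongr

/-- Nonexpansiveness of the composite prox step: if `ẑᵢ` minimizes
`⟨Gᵢ, z⟩ + (1/λ)H(z) + (1/η)D(z|z₀)` over `K` (with `D` the Bregman divergence
of the 1-strongly convex `H`), then `‖zh1 - zh2‖ ≤ (ηλ/(η+λ))‖G₁ - G₂‖`. -/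
theorem stmt_10 (d : ℕ) (K : Set (EuclideanSpace ℝ (Fin d)))
    (hKne : K.Nonempty) (hKc : IsClosed K) (hK : Convex ℝ K)
    (H : EuclideanSpace ℝ (Fin d) → ℝ) (H' : EuclideanSpace ℝ (Fin d) → EuclideanSpace ℝ (Fin d))
    (hdiff : ∀ x, HasGradientAt H (H' x) x)
    (hstrong : ConvexOn ℝ K (fun z => H z - 1 / 2 * ‖z‖ ^ 2))
    (G₁ G₂ : EuclideanSpace ℝ (Fin d)) (z₀ : EuclideanSpace ℝ (Fin d)) (hz₀ : z₀ ∈ K)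
    (η l : ℝ) (hη : 0 < η) (hl : 0 < l)
    (D : EuclideanSpace ℝ (Fin d) → EuclideanSpace ℝ (Fin d) → ℝ)
    (hD : ∀ z z', D z z' = H z - H z' - ⟪H' z', z - z'⟫)
    (zh1 zh2 : EuclideanSpace ℝ (Fin d)) (hzh1K : zh1 ∈ K) (hzh2K : zh2 ∈ K)
    (hzh1 : ∀ z ∈ K, ⟪G₁, zh1⟫ + (1 / l) * H zh1 + (1 / η) * D zh1 z₀ ≤
                    ⟪G₁, z⟫ + (1 / l) * H z + (1 / η) * D z z₀)
    (hzh2 : ∀ z ∈ K, ⟪G₂, zh2⟫ + (1 / l) * H zh2 + (1 / η) * D zh2 z₀ ≤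
                    ⟪G₂, z⟫ + (1 / l) * H z + (1 / η) * D z z₀) :
    ‖zh1 - zh2‖ ≤ (η * l / (η + l)) * ‖G₁ - G₂‖ :=
  stmt_10_general d K H H' hstrong G₁ G₂ z₀ η l hη hl D hD zh1 zh2 hzh1K hzh2K hzh1 hzh2
end
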